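/- arXiv:2502.21270 — 2 statements merged into one kernel-verified Lean document; each statement's English description precedes it below -/
import Mathlib

section
/- Let k and i be positive integers with i < k, and let a_1, ..., a_i be integers with 2 ≤ a_j ≤ k for all j. Set m = min(k, (∑_j a_j) - (i-1)) and w_t = (t-1)(2k-t). Then (∑_{j=1}^i w_{a_j}) / w_m ≥ (2k-2)/(2k-1-i), i.e., (2k-1-i)·(∑_{j=1}^i w_{a_j}) ≥ (2k-2)·w_m. -/
/-!
Put `x_j = a_j - 2 ∈ [0, k-2]`, `X = ∑ x_j` and `g x = w_{x+2} = (2k-2) + (2k-3) x - x²`, so that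
`m = min(k, X + i + 1)`. If `X + i + 1 ≤ k`, bounding `∑ x_j² ≤ X²` reduces the claim to the
polynomial identity whose slack is `X (i-1) (X + 2k - 1) ≥ 0`. Otherwise `m = k`, and the chord
bound `g x ≥ (2k-2) + (k-1) x` of the concave `g` on `[0, k-2]` together with `X ≥ k-1-i`
reduces it to `(2k-1-i)(k-1+i) = 2k(k-1) + (i-1)(k-1-i) ≥ 2k(k-1)`.
-/

open Finset

def virWeight (k t : ℤ) : ℤ := (t - 1) * (2 * k - t)

lemma virWeight_eq (k t : ℤ) :
    virWeight k t = (2 * k - 2) + (2 * k - 3) * (t - 2) - (t - 2) ^ 2 := by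
  unfold virWeight
  ring

lemma chord_le_virWeight {k t : ℤ} (h2t : 2 ≤ t) (htk : t ≤ k) :
    (2 * k - 2) + (k - 1) * (t - 2) ≤ virWeight k t := by
  rw [virWeight_eq]
  nlinarith [mul_nonneg (sub_nonneg.2 h2t) (sub_nonneg.2 htk)]

section Sums

variable {ι : Type*} (s : Finset ι) {k : ℤ} {a : ι → ℤ}

lemma card_mul_add_sub_sq_le_sum_virWeight (ha : ∀ j ∈ s, 2 ≤ a j) :
    #s * (2 * k - 2) + (2 * k - 3) * ∑ j ∈ s, (a j - 2) - (∑ j ∈ s, (a j - 2)) ^ 2 ≤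
      ∑ j ∈ s, virWeight k (a j) := by
  have hsq : ∑ j ∈ s, (a j - 2) ^ 2 ≤ (∑ j ∈ s, (a j - 2)) ^ 2 :=
    sum_sq_le_sq_sum_of_nonneg fun j hj ↦ sub_nonneg.2 (ha j hj)
  have hsum : ∑ j ∈ s, virWeight k (a j) =
      ∑ j ∈ s, ((2 * k - 2) + (2 * k - 3) * (a j - 2)) - ∑ j ∈ s, (a j - 2) ^ 2 := by
    rw [← sum_sub_distrib]
    exact sum_congr rfl fun j _ ↦ virWeight_eq k (a j)
  rw [hsum, sum_add_distrib, ← mul_sum, sum_const, nsmul_eq_mul]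
  linarith

lemma card_mul_add_chord_le_sum_virWeight (ha : ∀ j ∈ s, 2 ≤ a j ∧ a j ≤ k) :
    #s * (2 * k - 2) + (k - 1) * ∑ j ∈ s, (a j - 2) ≤ ∑ j ∈ s, virWeight k (a j) := by
  calc #s * (2 * k - 2) + (k - 1) * ∑ j ∈ s, (a j - 2)
      = ∑ j ∈ s, ((2 * k - 2) + (k - 1) * (a j - 2)) := by
        rw [sum_add_distrib, ← mul_sum, sum_const, nsmul_eq_mul]
    _ ≤ ∑ j ∈ s, virWeight k (a j) :=
        sum_le_sum fun j hj ↦ chord_le_virWeight (ha j hj).1 (ha j hj).2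

end Sums

section Polynomial

variable {k n X W : ℤ}

lemma mul_virWeight_le_of_add_sub_sq_le (hn : 1 ≤ n) (hnk : n < k) (hX : 0 ≤ X)
    (hW : n * (2 * k - 2) + (2 * k - 3) * X - X ^ 2 ≤ W) :
    (2 * k - 2) * virWeight k (X + n + 1) ≤ (2 * k - 1 - n) * W := by
  have hslack : (2 * k - 2) * virWeight k (X + n + 1) + X * (n - 1) * (X + 2 * k - 1) =
      (2 * k - 1 - n) * (n * (2 * k - 2) + (2 * k - 3) * X - X ^ 2) := by
    unfold virWeight
    ring
  have : 0 ≤ X * (n - 1) * (X + 2 * k - 1) := by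
    apply mul_nonneg (mul_nonneg hX _) <;> linarith
  have := mul_le_mul_of_nonneg_left hW (by linarith : (0 : ℤ) ≤ 2 * k - 1 - n)
  linarith

lemma mul_virWeight_self_le_of_add_chord_le (hn : 1 ≤ n) (hnk : n < k) (hX : k - 1 - n ≤ X)
    (hW : n * (2 * k - 2) + (k - 1) * X ≤ W) :
    (2 * k - 2) * virWeight k k ≤ (2 * k - 1 - n) * W := by
  have hslack : (2 * k - 1 - n) * (n * (2 * k - 2) + (k - 1) * (k - 1 - n)) =
      (2 * k - 2) * virWeight k k + (k - 1) * ((n - 1) * (k - 1 - n)) := by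
    unfold virWeight
    ring
  have : 0 ≤ (k - 1) * ((n - 1) * (k - 1 - n)) := by
    apply mul_nonneg _ (mul_nonneg _ _) <;> linarith
  have hW' : n * (2 * k - 2) + (k - 1) * (k - 1 - n) ≤ W := by
    linarith [mul_le_mul_of_nonneg_left hX (by linarith : (0 : ℤ) ≤ k - 1)]
  have := mul_le_mul_of_nonneg_left hW' (by linarith : (0 : ℤ) ≤ 2 * k - 1 - n)
  linarith

end Polynomial

/-- Conformal weight lemma for `Vir_{2,2k+1}`: for integers `2 ≤ a_j ≤ k`
(`j = 1, …, i`) with `i < k`, setting `m = min(k, ∑ a_j - (i-1))` and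
`w t = (t-1)(2k-t)`, we have `(∑ w (a j)) / w m ≥ (2k-2)/(2k-1-i)`, i.e.
`(2k-1-i) · ∑ w (a j) ≥ (2k-2) · w m`. -/
theorem vir_weight_ratio (k : ℤ) (i : ℕ) (hi : 0 < i) (hik : (i : ℤ) < k)
    (a : Fin i → ℤ) (ha : ∀ j, 2 ≤ a j ∧ a j ≤ k) :
    (2 * k - 2) *
        ((min k ((∑ j, a j) - ((i : ℤ) - 1)) - 1) *
          (2 * k - min k ((∑ j, a j) - ((i : ℤ) - 1)))) ≤
      (2 * k - 1 - (i : ℤ)) * ∑ j, (a j - 1) * (2 * k - a j) := by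
  show (2 * k - 2) * virWeight k (min k _) ≤ (2 * k - 1 - (i : ℤ)) * ∑ j, virWeight k (a j)
  set X := ∑ j, (a j - 2) with hXdef
  have hX : 0 ≤ X := sum_nonneg fun j _ ↦ sub_nonneg.2 (ha j).1
  have hsum : (∑ j, a j) - ((i : ℤ) - 1) = X + i + 1 := by
    simp only [hXdef, sum_sub_distrib, sum_const, card_univ, Fintype.card_fin, nsmul_eq_mul]
    ring
  have hi1 : (1 : ℤ) ≤ i := by exact_mod_cast hi
  have hcard : (#(univ : Finset (Fin i)) : ℤ) = i := by simp
  rw [hsum]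
  rcases le_total (X + i + 1) k with hm | hm
  · rw [min_eq_right hm]
    have hW := card_mul_add_sub_sq_le_sum_virWeight (k := k) univ fun j _ ↦ (ha j).1
    rw [hcard] at hW
    exact mul_virWeight_le_of_add_sub_sq_le hi1 hik hX hW
  · rw [min_eq_left hm]
    have hW := card_mul_add_chord_le_sum_virWeight univ fun j _ ↦ ha j
    rw [hcard] at hW
    exact mul_virWeight_self_le_of_add_chord_le hi1 hik (by linarith) hW
end

section
/- Let n, k be integers with n ≥ 4 and k ≥ 3, and let I be a subset of {1,...,n} with |I| ≥ k and 2|I| ≤ n. Suppose each w_{a_p} ≥ 2(k-1) for p ∈ I ∪ I^c (where a_p ≥ 2 and w_t = (t-1)(2k-t)), and w_m ≤ k(k-1). Then ∑_{p∈I} w_{a_p}·(n-|I|)(n-|I|-1)/((n-1)(n-2)) + ∑_{p∉I} w_{a_p}·|I|(|I|-1)/((n-1)(n-2)) > w_m. In particular, it suffices to show 2(k-1)·|I|·(n-|I|)/(n-1) > k(k-1), which follows from (n-|I|)/(n-1) > 1/2. -/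
/-!
Every weight is at least `w₀ = 2(k-1)`, and the two pair-counting coefficients are nonnegative,
so the left side is at least `w₀` times `|I| · (n-|I|)(n-|I|-1) + (n-|I|) · |I|(|I|-1)`
over `(n-1)(n-2)`, which collapses to `w₀ · |I|(n-|I|)/(n-1)`.
Since `2|I| ≤ n`, `2(n-|I|) ≥ n > n-1`, so this exceeds `(k-1) · |I| ≥ k(k-1)`.
-/

open Finset

theorem mul_pair_ratio_add_mul_pair_ratio {K : Type*} [Field K] {n c : K}
    (hn₁ : n - 1 ≠ 0) (hn₂ : n - 2 ≠ 0) :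
    c * ((n - c) * (n - c - 1) / ((n - 1) * (n - 2))) +
        (n - c) * (c * (c - 1) / ((n - 1) * (n - 2))) =
      c * (n - c) / (n - 1) := by
  field_simp
  ring

section

variable {K : Type*} [Field K] [LinearOrder K] [IsStrictOrderedRing K]

theorem mul_card_add_card_compl_le_sum_mul_add_sum_compl_mul {ι : Type*} [Fintype ι]
    [DecidableEq ι] (s : Finset ι) (f : ι → K) {w x y : K} (hf : ∀ i, w ≤ f i)
    (hx : 0 ≤ x) (hy : 0 ≤ y) :
    w * (#s * x + #sᶜ * y) ≤ (∑ i ∈ s, f i) * x + (∑ i ∈ sᶜ, f i) * y := by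
  have hs : #s * w ≤ ∑ i ∈ s, f i := by
    simpa using card_nsmul_le_sum s f w fun i _ => hf i
  have hsc : #sᶜ * w ≤ ∑ i ∈ sᶜ, f i := by
    simpa using card_nsmul_le_sum sᶜ f w fun i _ => hf i
  nlinarith [mul_le_mul_of_nonneg_right hs hx, mul_le_mul_of_nonneg_right hsc hy]

theorem mul_pred_lt_two_mul_pred_mul_div {k c n : K} (hk : 1 < k) (hkc : k ≤ c)
    (hcn : 2 * c ≤ n) :
    k * (k - 1) < 2 * (k - 1) * (c * (n - c) / (n - 1)) := by
  have hn : 0 < n - 1 := by linarith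
  have hkn : k * (n - 1) < 2 * (c * (n - c)) := by
    calc k * (n - 1) < k * n := by linarith
      _ ≤ c * n := mul_le_mul_of_nonneg_right hkc (by linarith)
      _ ≤ c * (2 * (n - c)) := mul_le_mul_of_nonneg_left (by linarith) (by linarith)
      _ = 2 * (c * (n - c)) := by ring
  rw [mul_assoc, mul_comm k, mul_div_assoc', ← mul_div_assoc, lt_div_iff₀ hn]
  nlinarith

end

theorem vir_standard_form_case1_general (n k : ℕ) (hk : 3 ≤ k)
    (I : Finset (Fin n)) (hIk : k ≤ I.card) (hI2 : 2 * I.card ≤ n)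
    (a : Fin n → ℤ)
    (hw : ∀ p, 2 * ((k : ℤ) - 1) ≤ (a p - 1) * (2 * (k : ℤ) - a p))
    (wm : ℚ) (hwm : wm ≤ (k : ℚ) * ((k : ℚ) - 1)) :
    wm <
      (∑ p ∈ I, ((a p : ℚ) - 1) * (2 * (k : ℚ) - (a p : ℚ))) *
          (((n : ℚ) - I.card) * ((n : ℚ) - I.card - 1) /
            (((n : ℚ) - 1) * ((n : ℚ) - 2))) +
        (∑ p ∈ Iᶜ, ((a p : ℚ) - 1) * (2 * (k : ℚ) - (a p : ℚ))) *
          (((I.card : ℚ)) * ((I.card : ℚ) - 1) /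
            (((n : ℚ) - 1) * ((n : ℚ) - 2))) := by
  have hkq : (3 : ℚ) ≤ k := by exact_mod_cast hk
  have hkc : (k : ℚ) ≤ #I := by exact_mod_cast hIk
  have hcn : 2 * (#I : ℚ) ≤ n := by exact_mod_cast hI2
  have hcompl : (#Iᶜ : ℚ) = n - #I := by
    rw [card_compl, Fintype.card_fin, Nat.cast_sub (by omega)]
  have hwq : ∀ p, 2 * ((k : ℚ) - 1) ≤ ((a p : ℚ) - 1) * (2 * (k : ℚ) - (a p : ℚ)) :=
    fun p => by exact_mod_cast hw p
  have hbound := mul_card_add_card_compl_le_sum_mul_add_sum_compl_mul I _ hwq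
    (x := ((n : ℚ) - #I) * ((n : ℚ) - #I - 1) / (((n : ℚ) - 1) * ((n : ℚ) - 2)))
    (y := (#I : ℚ) * ((#I : ℚ) - 1) / (((n : ℚ) - 1) * ((n : ℚ) - 2)))
    (by apply div_nonneg <;> nlinarith) (by apply div_nonneg <;> nlinarith)
  rw [hcompl, mul_pair_ratio_add_mul_pair_ratio (by linarith) (by linarith)] at hbound
  linarith [mul_pred_lt_two_mul_pred_mul_div (by linarith) hkc hcn]

/-- Case 1 (`|I| ≥ k`) of the proof that the standard form of the conformal
block divisor of `Vir_{2,2k+1}` has negative coefficients. -/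
theorem vir_standard_form_case1 (n k : ℕ) (hn : 4 ≤ n) (hk : 3 ≤ k)
    (I : Finset (Fin n)) (hIk : k ≤ I.card) (hI2 : 2 * I.card ≤ n)
    (a : Fin n → ℤ) (ha : ∀ p, 2 ≤ a p)
    (hw : ∀ p, 2 * ((k : ℤ) - 1) ≤ (a p - 1) * (2 * (k : ℤ) - a p))
    (wm : ℚ) (hwm : wm ≤ (k : ℚ) * ((k : ℚ) - 1)) :
    wm <
      (∑ p ∈ I, ((a p : ℚ) - 1) * (2 * (k : ℚ) - (a p : ℚ))) *
          (((n : ℚ) - I.card) * ((n : ℚ) - I.card - 1) /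
            (((n : ℚ) - 1) * ((n : ℚ) - 2))) +
        (∑ p ∈ Iᶜ, ((a p : ℚ) - 1) * (2 * (k : ℚ) - (a p : ℚ))) *
          (((I.card : ℚ)) * ((I.card : ℚ) - 1) /
            (((n : ℚ) - 1) * ((n : ℚ) - 2))) :=
  vir_standard_form_case1_general n k hk I hIk hI2 a hw wm hwm
end
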